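/- Let 1 ≤ k ≤ N and assume the step ratios satisfy 0 < r_i < (3+√17)/2 for 2 ≤ i ≤ N. Let Φ : [0, t_N] → ℝ be three times continuously differentiable, define the local consistency error ξ^j := D_2Φ(t_j) − Φ'(t_j), where D_2Φ(t_j) := Σ_{m=1}^{j} b_{j−m}^{(j)} (Φ(t_m) − Φ(t_{m−1})), and define the convolutional consistency error Ξ^k := Σ_{j=1}^{k} θ_{k−j}^{(k)} ξ^j. Then |Ξ^k| ≤ θ_{k−1}^{(k)} ∫_0^{t_1} |Φ''(t)| dt + 3 Σ_{j=1}^{k} θ_{k−j}^{(k)} τ_j ∫_{t_{j−1}}^{t_j} |Φ'''(t)| dt. -/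

import Mathlib

open Finset intervalIntegral

/-- BDF2 kernels `b_j^{(n)}` (assuming `r 1 = 0`, so the `n = 1` case
`b_0^{(1)} = 1/τ_1` is subsumed by the general formula). -/
noncomputable def bk (τ r : ℕ → ℝ) (n j : ℕ) : ℝ :=
  if j = 0 then (1 + 2 * r n) / (τ n * (1 + r n))
  else if j = 1 then -(r n) ^ 2 / (τ n * (1 + r n))
  else 0

/-- DOC kernels: `th τ r n m = θ_m^{(n)}`, i.e. `θ_{n-k}^{(n)}` with `m = n - k`. -/
noncomputable def th (τ r : ℕ → ℝ) (n : ℕ) : ℕ → ℝ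
  | 0 => 1 / bk τ r n 0
  | m + 1 => -(1 / bk τ r (n - (m + 1)) 0) *
      ∑ i ∈ (Finset.range (m + 1)).attach,
        th τ r n i.1 * bk τ r (n - i.1) (m + 1 - i.1)
  decreasing_by exact Finset.mem_range.mp i.2

/-- Grid points `t_n := Σ_{k=1}^{n} τ_k` (so `t_0 = 0`). -/
noncomputable def tg (τ : ℕ → ℝ) (n : ℕ) : ℝ := ∑ k ∈ Finset.Icc 1 n, τ k

/-- Local BDF2 consistency error `ξ^j := D_2Φ(t_j) − Φ'(t_j)`. -/
noncomputable def xi (τ r : ℕ → ℝ) (Φ : ℝ → ℝ) (j : ℕ) : ℝ :=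
  (∑ m ∈ Finset.Icc 1 j, bk τ r j (j - m) * (Φ (tg τ m) - Φ (tg τ (m - 1))))
    - deriv Φ (tg τ j)

/-!
The DOC kernels obey `θ^{(n)}_{m+1} = θ^{(n)}_m · (-b_1^{(n-m)}) / b_0^{(n-m-1)}`, so they are
nonnegative because `b_1 ≤ 0 < b_0`. Since BDF2 is exact on quadratics, `ξ^j` (for `j ≥ 2`) is
controlled by `Φ'''` on `[t_{j-2}, t_j]`: the current step contributes at most
`2 τ_j ∫ |Φ'''|`, the previous one `|b_1^{(j)}| τ_{j-1}² / 2 · ∫ |Φ'''|`. After multiplication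
by `θ^{(k)}_{k-j}`, the recursion and `b_0^{(j-1)} τ_{j-1} ≤ 2` turn the latter into at most
`θ^{(k)}_{k-j+1} τ_{j-1} ∫_{t_{j-2}}^{t_{j-1}} |Φ'''|`, the term of index `j - 1` on the
right-hand side; hence the constant `2 + 1 = 3`. The first step is only first order, whence the
`Φ''` term.
-/

theorem abs_sub_le_integral_abs_deriv {f : ℝ → ℝ} (hf : ContDiff ℝ 1 f) {a s c : ℝ}
    (has : a ≤ s) (hsc : s ≤ c) : |f c - f s| ≤ ∫ x in a..c, |deriv f x| := by
  have hd : ∀ x, HasDerivAt f (deriv f x) x :=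
    fun x => (hf.differentiable one_ne_zero x).hasDerivAt
  have hcont : Continuous (deriv f) := hf.continuous_deriv le_rfl
  rw [← integral_eq_sub_of_hasDerivAt (fun x _ => hd x) (hcont.intervalIntegrable s c)]
  calc |∫ x in s..c, deriv f x| ≤ ∫ x in s..c, |deriv f x| := abs_integral_le_integral_abs hsc
    _ ≤ ∫ x in a..c, |deriv f x| :=
      integral_mono_interval has hsc le_rfl (.of_forall fun _ => abs_nonneg _)
        (hcont.abs.intervalIntegrable a c)

theorem abs_sub_sub_deriv_mul_le {f : ℝ → ℝ} (hf : ContDiff ℝ 2 f) {a t u c : ℝ}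
    (hat : a ≤ t) (htu : t ≤ u) (huc : u ≤ c) :
    |f t - f u - deriv f c * (t - u)| ≤ (u - t) * ∫ x in a..c, |iteratedDeriv 2 f x| := by
  have hF : ∀ x ∈ Set.Icc t u,
      HasDerivWithinAt (fun x => f x - deriv f c * x) (deriv f x - deriv f c) (Set.Icc t u) x :=
    fun x _ => ((hf.differentiable two_ne_zero x).hasDerivAt.sub
      (by simpa using (hasDerivAt_id x).const_mul (deriv f c))).hasDerivWithinAt
  have hbound : ∀ x ∈ Set.Ico t u,
      ‖deriv f x - deriv f c‖ ≤ ∫ x in a..c, |iteratedDeriv 2 f x| := by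
    intro x hx
    rw [Real.norm_eq_abs, abs_sub_comm, iteratedDeriv_succ', iteratedDeriv_one]
    exact abs_sub_le_integral_abs_deriv hf.deriv' (hat.trans hx.1) (hx.2.le.trans huc)
  have key := norm_image_sub_le_of_norm_deriv_le_segment' hF hbound u ⟨htu, le_rfl⟩
  rw [Real.norm_eq_abs] at key
  calc |f t - f u - deriv f c * (t - u)| = |f u - deriv f c * u - (f t - deriv f c * t)| := by
        rw [← abs_neg]; congr 1; ring
    _ ≤ _ := key.trans_eq (mul_comm _ _)

/-- Expanding through `b` keeps the integral over the long interval `[a, c]` multiplied only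
by `b - t`. -/
theorem abs_sub_sub_deriv_mul_le_of_le {f : ℝ → ℝ} (hf : ContDiff ℝ 2 f) {a t b c : ℝ}
    (hat : a ≤ t) (htb : t ≤ b) (hbc : b ≤ c) :
    |f t - f c - deriv f c * (t - c)| ≤
      (c - b) * (∫ x in b..c, |iteratedDeriv 2 f x|) +
        (b - t) * ∫ x in a..c, |iteratedDeriv 2 f x| := by
  calc |f t - f c - deriv f c * (t - c)|
      = |(f t - f b - deriv f c * (t - b)) + (f b - f c - deriv f c * (b - c))| := by
        congr 1; ring
    _ ≤ |f t - f b - deriv f c * (t - b)| + |f b - f c - deriv f c * (b - c)| := abs_add_le _ _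
    _ ≤ _ := by
        rw [add_comm]
        exact add_le_add (abs_sub_sub_deriv_mul_le hf le_rfl hbc le_rfl)
          (abs_sub_sub_deriv_mul_le hf hat htb hbc)

theorem abs_sub_le_of_abs_deriv_le_affine {F F' : ℝ → ℝ} {x y α β : ℝ} (hxy : x ≤ y)
    (hF : ∀ t, HasDerivAt F (F' t) t) (hbound : ∀ t ∈ Set.Icc x y, |F' t| ≤ α + (y - t) * β) :
    |F y - F x| ≤ α * (y - x) + (y - x) ^ 2 / 2 * β := by
  have hfence : ∀ t, HasDerivAt (fun t => (α + β * (y - x)) * (t - x) - β / 2 * (t - x) ^ 2)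
      (α + (y - t) * β) t := fun t => by
    have h := (hasDerivAt_id' t).sub_const x
    exact ((h.const_mul (α + β * (y - x))).sub ((h.pow 2).const_mul (β / 2))).congr_deriv
      (by push_cast; ring)
  have key := image_norm_le_of_norm_deriv_right_le_deriv_boundary (f := fun t => F t - F x)
    (fun t _ => ((hF t).sub_const (F x)).continuousAt.continuousWithinAt)
    (fun t _ => ((hF t).sub_const (F x)).hasDerivWithinAt) (by simp) hfence
    (fun t ht => hbound t (Set.Ico_subset_Icc_self ht)) ⟨hxy, le_rfl⟩
  rw [Real.norm_eq_abs] at key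
  linarith

theorem abs_three_point_error_le {Φ : ℝ → ℝ} (hΦ : ContDiff ℝ 3 Φ) {A B C b₀ b₁ : ℝ}
    (hAB : A ≤ B) (hBC : B ≤ C) (h₁ : b₀ * (C - B) + b₁ * (B - A) = 1)
    (h₂ : b₀ * (C - B) ^ 2 + b₁ * (B - A) * (B - A + 2 * (C - B)) = 0) :
    |b₀ * (Φ C - Φ B) + b₁ * (Φ B - Φ A) - deriv Φ C| ≤
      (|b₀| * (C - B) ^ 2 / 2 + |b₁| * ((C - B) * (B - A) + (B - A) ^ 2 / 2)) *
          (∫ t in B..C, |iteratedDeriv 3 Φ t|) +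
        |b₁| * (B - A) ^ 2 / 2 * ∫ t in A..B, |iteratedDeriv 3 Φ t| := by
  set g := deriv Φ
  set P₀ := ∫ t in B..C, |iteratedDeriv 3 Φ t|
  set P₁ := ∫ t in A..B, |iteratedDeriv 3 Φ t|
  have hg : ContDiff ℝ 2 g := hΦ.deriv'
  have hg₂ : iteratedDeriv 2 g = iteratedDeriv 3 Φ := (iteratedDeriv_succ' ..).symm
  -- `Ψ` is `Φ` minus its quadratic Taylor polynomial at `C`; exactness of the formula on
  -- quadratics (`h₁`, `h₂`) lets `Ψ` replace `Φ`.
  set Ψ := fun t => Φ t - g C * (t - C) - deriv g C / 2 * (t - C) ^ 2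
  have hΨ : ∀ t, HasDerivAt Ψ (g t - g C - deriv g C * (t - C)) t := fun t => by
    have h := (hasDerivAt_id' t).sub_const C
    exact (((hΦ.differentiable (by norm_num) t).hasDerivAt.sub (h.const_mul (g C))).sub
      ((h.pow 2).const_mul (deriv g C / 2))).congr_deriv (by push_cast; ring)
  have hexact : b₀ * (Φ C - Φ B) + b₁ * (Φ B - Φ A) - g C =
      b₀ * (Ψ C - Ψ B) + b₁ * (Ψ B - Ψ A) := by
    simp only [Ψ]
    linear_combination (g C) * h₁ - (deriv g C / 2) * h₂
  have hnear : ∀ t ∈ Set.Icc B C, |g t - g C - deriv g C * (t - C)| ≤ 0 + (C - t) * P₀ :=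
    fun t ht => (hg₂ ▸ abs_sub_sub_deriv_mul_le hg ht.1 ht.2 le_rfl).trans_eq (zero_add _).symm
  have hfar : ∀ t ∈ Set.Icc A B,
      |g t - g C - deriv g C * (t - C)| ≤ (C - B) * P₀ + (B - t) * (P₁ + P₀) := fun t ht => by
    have h := abs_sub_sub_deriv_mul_le_of_le hg ht.1 ht.2 hBC
    rwa [hg₂, ← integral_add_adjacent_intervals
      ((hΦ.continuous_iteratedDeriv 3 le_rfl).abs.intervalIntegrable A B)
      ((hΦ.continuous_iteratedDeriv 3 le_rfl).abs.intervalIntegrable B C)] at h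
  have hI₀ := abs_sub_le_of_abs_deriv_le_affine hBC hΨ hnear
  have hI₁ := abs_sub_le_of_abs_deriv_le_affine hAB hΨ hfar
  rw [hexact]
  calc |b₀ * (Ψ C - Ψ B) + b₁ * (Ψ B - Ψ A)|
      ≤ |b₀| * |Ψ C - Ψ B| + |b₁| * |Ψ B - Ψ A| := by
        rw [← abs_mul, ← abs_mul]; exact abs_add_le _ _
    _ ≤ |b₀| * (0 * (C - B) + (C - B) ^ 2 / 2 * P₀) +
        |b₁| * ((C - B) * P₀ * (B - A) + (B - A) ^ 2 / 2 * (P₁ + P₀)) := by gcongr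
    _ = _ := by ring

theorem bk_of_two_le (τ r : ℕ → ℝ) (n : ℕ) {j : ℕ} (hj : 2 ≤ j) : bk τ r n j = 0 := by
  rw [bk, if_neg (by omega), if_neg (by omega)]

section Kernels

variable {τ r : ℕ → ℝ} {n : ℕ}

theorem bk_zero_pos (hτ : 0 < τ n) (hr : 0 ≤ r n) : 0 < bk τ r n 0 := by
  rw [bk, if_pos rfl]; positivity

theorem bk_one_nonpos (hτ : 0 < τ n) (hr : 0 ≤ r n) : bk τ r n 1 ≤ 0 := by
  rw [bk, if_neg one_ne_zero, if_pos rfl, neg_div]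
  exact neg_nonpos.mpr (by positivity)

theorem bk_zero_mul_le_two (hτ : 0 < τ n) (hr : 0 ≤ r n) : bk τ r n 0 * τ n ≤ 2 := by
  rw [bk, if_pos rfl, div_mul_eq_mul_div, div_le_iff₀ (by positivity)]
  nlinarith

theorem bk_exact_linear {m : ℕ} (hτ₀ : 0 < τ m) (hτ₁ : 0 < τ (m + 1))
    (hr : r (m + 1) = τ (m + 1) / τ m) :
    bk τ r (m + 1) 0 * τ (m + 1) + bk τ r (m + 1) 1 * τ m = 1 := by
  simp only [bk, if_pos, if_neg one_ne_zero, hr]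
  field_simp
  ring

theorem bk_exact_quadratic {m : ℕ} (hτ₀ : 0 < τ m) (hτ₁ : 0 < τ (m + 1))
    (hr : r (m + 1) = τ (m + 1) / τ m) :
    bk τ r (m + 1) 0 * τ (m + 1) ^ 2 + bk τ r (m + 1) 1 * τ m * (τ m + 2 * τ (m + 1)) = 0 := by
  simp only [bk, if_pos, if_neg one_ne_zero, hr]
  field_simp
  ring

theorem bk_error_coeff_le {m : ℕ} (hτ₀ : 0 < τ m) (hτ₁ : 0 < τ (m + 1))
    (hr : r (m + 1) = τ (m + 1) / τ m) :
    bk τ r (m + 1) 0 * τ (m + 1) ^ 2 / 2 + -bk τ r (m + 1) 1 * (τ (m + 1) * τ m + τ m ^ 2 / 2)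
      ≤ 2 * τ (m + 1) := by
  simp only [bk, if_pos, if_neg one_ne_zero, hr]
  rw [← sub_nonneg]
  field_simp
  nlinarith [mul_pos hτ₀ hτ₁]

end Kernels

theorem th_succ (τ r : ℕ → ℝ) (n m : ℕ) :
    th τ r n (m + 1) = th τ r n m * -bk τ r (n - m) 1 / bk τ r (n - (m + 1)) 0 := by
  rw [th, sum_attach (range (m + 1)) fun i => th τ r n i * bk τ r (n - i) (m + 1 - i),
    sum_eq_single_of_mem m (self_mem_range_succ m) fun i hi hne => by
      rw [bk_of_two_le τ r _ (by rw [Finset.mem_range] at hi; omega), mul_zero],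
    Nat.add_sub_cancel_left]
  ring

theorem th_nonneg {τ r : ℕ → ℝ} {n : ℕ} (hτ : ∀ j, 1 ≤ j → j ≤ n → 0 < τ j)
    (hr : ∀ j, 1 ≤ j → j ≤ n → 0 ≤ r j) {m : ℕ} (hm : m < n) : 0 ≤ th τ r n m := by
  induction m with
  | zero => rw [th]; exact one_div_nonneg.mpr (bk_zero_pos (hτ n (by omega) le_rfl)
      (hr n (by omega) le_rfl)).le
  | succ m ih =>
    rw [th_succ]
    refine div_nonneg (mul_nonneg (ih (by omega)) (neg_nonneg.mpr ?_)) (bk_zero_pos ?_ ?_).le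
    · exact bk_one_nonpos (hτ _ (by omega) (by omega)) (hr _ (by omega) (by omega))
    · exact hτ _ (by omega) (by omega)
    · exact hr _ (by omega) (by omega)

theorem th_mul_neg_bk_one_le {τ r : ℕ → ℝ} {k i : ℕ} (hik : i + 2 ≤ k) (hτ : 0 < τ (i + 1))
    (hr : 0 ≤ r (i + 1)) (hθ : 0 ≤ th τ r k (k - (i + 1))) :
    th τ r k (k - (i + 2)) * -bk τ r (i + 2) 1 * τ (i + 1) ^ 2 / 2 ≤
      th τ r k (k - (i + 1)) * τ (i + 1) := by
  have hb₀ := bk_zero_pos hτ hr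
  have hθ' : th τ r k (k - (i + 2)) * -bk τ r (i + 2) 1 =
      th τ r k (k - (i + 1)) * bk τ r (i + 1) 0 := by
    have h := th_succ τ r k (k - (i + 2))
    rw [show k - (i + 2) + 1 = k - (i + 1) by omega, show k - (k - (i + 2)) = i + 2 by omega,
      show k - (k - (i + 1)) = i + 1 by omega] at h
    rw [h, div_mul_cancel₀ _ hb₀.ne']
  rw [hθ']
  nlinarith [bk_zero_mul_le_two hτ hr, mul_nonneg hθ hτ.le]

theorem ratio_nonneg {N : ℕ} {τ r : ℕ → ℝ} (hτ : ∀ k, 1 ≤ k → k ≤ N → 0 < τ k) (hr1 : r 1 = 0)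
    (hr : ∀ k, 2 ≤ k → k ≤ N → r k = τ k / τ (k - 1)) {j : ℕ} (hj : 1 ≤ j) (hjN : j ≤ N) :
    0 ≤ r j := by
  rcases hj.eq_or_lt with rfl | hj
  · exact hr1.ge
  · rw [hr j hj hjN]
    exact div_nonneg (hτ j (by omega) hjN).le (hτ (j - 1) (by omega) (by omega)).le

theorem tg_zero (τ : ℕ → ℝ) : tg τ 0 = 0 := by simp [tg]

theorem tg_succ (τ : ℕ → ℝ) (m : ℕ) : tg τ (m + 1) = tg τ m + τ (m + 1) :=
  sum_Icc_succ_top (by omega) τ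

theorem tg_le_tg_succ {τ : ℕ → ℝ} {m : ℕ} (hτ : 0 ≤ τ (m + 1)) : tg τ m ≤ tg τ (m + 1) := by
  rw [tg_succ]; linarith

theorem tg_one (τ : ℕ → ℝ) : tg τ 1 = τ 1 := by rw [tg_succ, tg_zero, zero_add]

theorem xi_one {τ r : ℕ → ℝ} (Φ : ℝ → ℝ) (hr : r 1 = 0) :
    xi τ r Φ 1 = (Φ (τ 1) - Φ 0) / τ 1 - deriv Φ (τ 1) := by
  simp [xi, bk, hr, tg_one, tg_zero]
  ring

theorem xi_add_two (τ r : ℕ → ℝ) (Φ : ℝ → ℝ) (i : ℕ) :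
    xi τ r Φ (i + 2) = bk τ r (i + 2) 0 * (Φ (tg τ (i + 2)) - Φ (tg τ (i + 1))) +
      bk τ r (i + 2) 1 * (Φ (tg τ (i + 1)) - Φ (tg τ i)) - deriv Φ (tg τ (i + 2)) := by
  rw [xi, show i + 2 = i + 1 + 1 from rfl, sum_Icc_succ_top (by omega),
    sum_Icc_succ_top (by omega), sum_eq_zero fun m hm => by
      rw [bk_of_two_le τ r _ (by rw [mem_Icc] at hm; omega), zero_mul]]
  simp only [zero_add, Nat.sub_self, Nat.add_sub_cancel, Nat.add_sub_cancel_left]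
  ring

theorem abs_xi_one_le {τ r : ℕ → ℝ} {Φ : ℝ → ℝ} (hΦ : ContDiff ℝ 2 Φ) (hr : r 1 = 0)
    (hτ : 0 < τ 1) : |xi τ r Φ 1| ≤ ∫ t in (0 : ℝ)..tg τ 1, |iteratedDeriv 2 Φ t| := by
  have h := abs_sub_sub_deriv_mul_le hΦ le_rfl hτ.le le_rfl
  rw [sub_zero] at h
  rw [xi_one Φ hr, tg_one, show (Φ (τ 1) - Φ 0) / τ 1 - deriv Φ (τ 1) =
      -(Φ 0 - Φ (τ 1) - deriv Φ (τ 1) * (0 - τ 1)) / τ 1 by field_simp; ring,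
    abs_div, abs_neg, abs_of_pos hτ, div_le_iff₀ hτ]
  exact h.trans_eq (mul_comm _ _)

theorem abs_xi_add_two_le {τ r : ℕ → ℝ} {Φ : ℝ → ℝ} (hΦ : ContDiff ℝ 3 Φ) {i : ℕ}
    (hτ₁ : 0 < τ (i + 1)) (hτ₂ : 0 < τ (i + 2)) (hr : r (i + 2) = τ (i + 2) / τ (i + 1)) :
    |xi τ r Φ (i + 2)| ≤
      2 * τ (i + 2) * (∫ t in tg τ (i + 1)..tg τ (i + 2), |iteratedDeriv 3 Φ t|) +
        -bk τ r (i + 2) 1 * τ (i + 1) ^ 2 / 2 *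
          ∫ t in tg τ i..tg τ (i + 1), |iteratedDeriv 3 Φ t| := by
  have hCB : tg τ (i + 2) - tg τ (i + 1) = τ (i + 2) := by rw [tg_succ]; ring
  have hBA : tg τ (i + 1) - tg τ i = τ (i + 1) := by rw [tg_succ]; ring
  have hr₀ : 0 ≤ r (i + 2) := hr ▸ by positivity
  have h := abs_three_point_error_le (A := tg τ i) (B := tg τ (i + 1)) (C := tg τ (i + 2))
    (b₀ := bk τ r (i + 2) 0) (b₁ := bk τ r (i + 2) 1) hΦ (by linarith) (by linarith)
    (by rw [hCB, hBA]; exact bk_exact_linear hτ₁ hτ₂ hr)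
    (by rw [hCB, hBA]; exact bk_exact_quadratic hτ₁ hτ₂ hr)
  rw [hCB, hBA, abs_of_pos (bk_zero_pos hτ₂ hr₀), abs_of_nonpos (bk_one_nonpos hτ₂ hr₀)] at h
  rw [xi_add_two]
  refine h.trans (add_le_add (mul_le_mul_of_nonneg_right ?_ ?_) le_rfl)
  · exact bk_error_coeff_le hτ₁ hτ₂ hr
  · exact intervalIntegral.integral_nonneg (by linarith) fun _ _ => abs_nonneg _

theorem sum_Icc_le_add_three_mul_sum {a c : ℕ → ℝ} {k : ℕ} (hk : 1 ≤ k)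
    (ha : ∀ j ∈ Icc 1 k, 0 ≤ a j)
    (hc : ∀ j ∈ Icc 2 k, c j ≤ 2 * a j + a (j - 1)) :
    ∑ j ∈ Icc 1 k, c j ≤ c 1 + 3 * ∑ j ∈ Icc 1 k, a j := by
  suffices h : ∀ n, 1 ≤ n → n ≤ k → ∑ j ∈ Icc 1 n, c j + a n ≤ c 1 + 3 * ∑ j ∈ Icc 1 n, a j by
    linarith [h k hk le_rfl, ha k (mem_Icc.mpr ⟨hk, le_rfl⟩)]
  intro n hn
  induction n, hn using Nat.le_induction with
  | base => intro _; simp; linarith [ha 1 (mem_Icc.mpr ⟨le_rfl, hk⟩)]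
  | succ n hn ih =>
    intro hnk
    have := hc (n + 1) (mem_Icc.mpr ⟨by omega, hnk⟩)
    rw [sum_Icc_succ_top (by omega), sum_Icc_succ_top (by omega)]
    rw [Nat.add_sub_cancel] at this
    linarith [ih (by omega)]

theorem th_mul_abs_xi_add_two_le {τ r : ℕ → ℝ} {Φ : ℝ → ℝ} (hΦ : ContDiff ℝ 3 Φ) {k i : ℕ}
    (hik : i + 2 ≤ k) (hτ₁ : 0 < τ (i + 1)) (hτ₂ : 0 < τ (i + 2)) (hr₁ : 0 ≤ r (i + 1))
    (hr₂ : r (i + 2) = τ (i + 2) / τ (i + 1)) (hθ₁ : 0 ≤ th τ r k (k - (i + 1)))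
    (hθ₂ : 0 ≤ th τ r k (k - (i + 2))) :
    th τ r k (k - (i + 2)) * |xi τ r Φ (i + 2)| ≤
      2 * (th τ r k (k - (i + 2)) * τ (i + 2) *
          ∫ t in tg τ (i + 1)..tg τ (i + 2), |iteratedDeriv 3 Φ t|) +
        th τ r k (k - (i + 1)) * τ (i + 1) *
          ∫ t in tg τ i..tg τ (i + 1), |iteratedDeriv 3 Φ t| := by
  have hP : 0 ≤ ∫ t in tg τ i..tg τ (i + 1), |iteratedDeriv 3 Φ t| :=
    intervalIntegral.integral_nonneg (tg_le_tg_succ hτ₁.le) fun _ _ => abs_nonneg _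
  calc th τ r k (k - (i + 2)) * |xi τ r Φ (i + 2)|
      ≤ th τ r k (k - (i + 2)) * (2 * τ (i + 2) *
          (∫ t in tg τ (i + 1)..tg τ (i + 2), |iteratedDeriv 3 Φ t|) +
        -bk τ r (i + 2) 1 * τ (i + 1) ^ 2 / 2 *
          ∫ t in tg τ i..tg τ (i + 1), |iteratedDeriv 3 Φ t|) :=
        mul_le_mul_of_nonneg_left (abs_xi_add_two_le hΦ hτ₁ hτ₂ hr₂) hθ₂
    _ = 2 * (th τ r k (k - (i + 2)) * τ (i + 2) *
          ∫ t in tg τ (i + 1)..tg τ (i + 2), |iteratedDeriv 3 Φ t|) +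
        th τ r k (k - (i + 2)) * -bk τ r (i + 2) 1 * τ (i + 1) ^ 2 / 2 *
          ∫ t in tg τ i..tg τ (i + 1), |iteratedDeriv 3 Φ t| := by ring
    _ ≤ _ := add_le_add le_rfl
        (mul_le_mul_of_nonneg_right (th_mul_neg_bk_one_le hik hτ₁ hr₁ hθ₁) hP)

theorem stmt12_general (N : ℕ) (τ r : ℕ → ℝ)
    (hτ : ∀ k, 1 ≤ k → k ≤ N → 0 < τ k)
    (hr1 : r 1 = 0)
    (hr : ∀ k, 2 ≤ k → k ≤ N → r k = τ k / τ (k - 1))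
    (Φ : ℝ → ℝ) (hΦ : ContDiff ℝ 3 Φ)
    (k : ℕ) (hk1 : 1 ≤ k) (hkN : k ≤ N) :
    |∑ j ∈ Finset.Icc 1 k, th τ r k (k - j) * xi τ r Φ j| ≤
      th τ r k (k - 1) * (∫ t in (0:ℝ)..(tg τ 1), |iteratedDeriv 2 Φ t|)
        + 3 * ∑ j ∈ Finset.Icc 1 k,
            th τ r k (k - j) * τ j *
              ∫ t in (tg τ (j - 1))..(tg τ j), |iteratedDeriv 3 Φ t| := by
  have hr₀ : ∀ j, 1 ≤ j → j ≤ N → 0 ≤ r j := fun j => ratio_nonneg hτ hr1 hr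
  have hθ : ∀ j ∈ Icc 1 k, 0 ≤ th τ r k (k - j) := fun j hj =>
    th_nonneg (fun i hi hik => hτ i hi (hik.trans hkN)) (fun i hi hik => hr₀ i hi (hik.trans hkN))
      (by rw [mem_Icc] at hj; omega)
  have hstep : ∀ j ∈ Icc 2 k, th τ r k (k - j) * |xi τ r Φ j| ≤
      2 * (th τ r k (k - j) * τ j * ∫ t in tg τ (j - 1)..tg τ j, |iteratedDeriv 3 Φ t|) +
        th τ r k (k - (j - 1)) * τ (j - 1) *
          ∫ t in tg τ (j - 1 - 1)..tg τ (j - 1), |iteratedDeriv 3 Φ t| := by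
    intro j hj
    obtain ⟨i, rfl⟩ : ∃ i, j = i + 2 := ⟨j - 2, by rw [mem_Icc] at hj; omega⟩
    rw [mem_Icc] at hj
    exact th_mul_abs_xi_add_two_le hΦ hj.2 (hτ _ (by omega) (by omega))
      (hτ _ (by omega) (by omega)) (hr₀ _ (by omega) (by omega)) (hr _ (by omega) (by omega))
      (hθ _ (mem_Icc.mpr ⟨by omega, by omega⟩)) (hθ _ (mem_Icc.mpr ⟨by omega, hj.2⟩))
  calc |∑ j ∈ Icc 1 k, th τ r k (k - j) * xi τ r Φ j|
      ≤ ∑ j ∈ Icc 1 k, th τ r k (k - j) * |xi τ r Φ j| :=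
        (abs_sum_le_sum_abs _ _).trans_eq <| sum_congr rfl fun j hj => by
          rw [abs_mul, abs_of_nonneg (hθ j hj)]
    _ ≤ th τ r k (k - 1) * |xi τ r Φ 1| + 3 * ∑ j ∈ Icc 1 k,
          th τ r k (k - j) * τ j * ∫ t in tg τ (j - 1)..tg τ j, |iteratedDeriv 3 Φ t| := by
        refine sum_Icc_le_add_three_mul_sum hk1 (fun j hj => ?_) hstep
        obtain ⟨i, rfl⟩ : ∃ i, j = i + 1 := ⟨j - 1, by rw [mem_Icc] at hj; omega⟩
        rw [mem_Icc] at hj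
        have hτi := (hτ _ hj.1 (by omega)).le
        exact mul_nonneg (mul_nonneg (hθ _ (mem_Icc.mpr hj)) hτi)
          (intervalIntegral.integral_nonneg (tg_le_tg_succ hτi) fun _ _ => abs_nonneg _)
    _ ≤ _ := add_le_add (mul_le_mul_of_nonneg_left
        (abs_xi_one_le (hΦ.of_le (by norm_num)) hr1 (hτ 1 le_rfl (by omega)))
        (hθ 1 (mem_Icc.mpr ⟨le_rfl, hk1⟩))) le_rfl

theorem stmt12 (N : ℕ) (τ r : ℕ → ℝ)
    (hτ : ∀ k, 1 ≤ k → k ≤ N → 0 < τ k)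
    (hr1 : r 1 = 0)
    (hr : ∀ k, 2 ≤ k → k ≤ N → r k = τ k / τ (k - 1))
    (hratio : ∀ i, 2 ≤ i → i ≤ N → 0 < r i ∧ r i < (3 + Real.sqrt 17) / 2)
    (Φ : ℝ → ℝ) (hΦ : ContDiff ℝ 3 Φ)
    (k : ℕ) (hk1 : 1 ≤ k) (hkN : k ≤ N) :
    |∑ j ∈ Finset.Icc 1 k, th τ r k (k - j) * xi τ r Φ j| ≤
      th τ r k (k - 1) * (∫ t in (0:ℝ)..(tg τ 1), |iteratedDeriv 2 Φ t|)
        + 3 * ∑ j ∈ Finset.Icc 1 k,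
            th τ r k (k - j) * τ j *
              ∫ t in (tg τ (j - 1))..(tg τ j), |iteratedDeriv 3 Φ t| :=
  stmt12_general N τ r hτ hr1 hr Φ hΦ k hk1 hkN
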